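/- arXiv:2501.06100 — 3 statements merged into one kernel-verified Lean document; each statement's English description precedes it below -/
import Mathlib

section
/- If U_A is an (α, a, ε_A)-block-encoding of an s-qubit operator A and U_B is a (β, b, ε_B)-block-encoding of a t-qubit operator B, then (up to a permutation of qubit registers) U_A ⊗ U_B is an (αβ, a+b, αε_B + βε_A + ε_A ε_B)-block-encoding of A ⊗ B. -/
open Matrix Kronecker
open scoped Matrix.Norms.L2Operator

section Aux
variable {m n p q : Type*} [Fintype m] [Fintype n] [Fintype p] [Fintype q]
  [DecidableEq m] [DecidableEq n] [DecidableEq p] [DecidableEq q]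

lemma opNorm_le_of_mulVec (M : Matrix m n ℂ) {c : ℝ} (hc : 0 ≤ c)
    (h : ∀ v : EuclideanSpace ℂ n,
      ‖((WithLp.equiv 2 (m → ℂ)).symm (M *ᵥ (WithLp.equiv 2 (n → ℂ)) v))‖ ≤ c * ‖v‖) :
    ‖M‖ ≤ c := by
  rw [Matrix.l2_opNorm_def]
  refine ContinuousLinearMap.opNorm_le_bound _ hc fun v => ?_
  simpa [Matrix.toEuclideanLin_apply] using h v

lemma norm_kronecker_one_le (X : Matrix m n ℂ) :
    ‖X ⊗ₖ (1 : Matrix p p ℂ)‖ ≤ ‖X‖ := by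
  refine opNorm_le_of_mulVec _ (norm_nonneg X) fun v => ?_
  have hmul : ∀ i k, ((X ⊗ₖ (1 : Matrix p p ℂ)) *ᵥ (WithLp.equiv 2 _) v) (i, k)
      = (X *ᵥ fun j => v (j, k)) i := by
    intro i k
    simp [Matrix.mulVec, dotProduct, Fintype.sum_prod_type, Matrix.one_apply,
      mul_ite, ite_mul, Finset.sum_ite_eq']
  rw [EuclideanSpace.norm_eq]
  have hle : ∀ k : p, (∑ i, ‖(X *ᵥ fun j => v (j, k)) i‖ ^ 2)
      ≤ ‖X‖ ^ 2 * ∑ j, ‖v (j, k)‖ ^ 2 := by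
    intro k
    have h1 := Matrix.l2_opNorm_mulVec X ((WithLp.equiv 2 (n → ℂ)).symm fun j => v (j, k))
    have h2 : ‖(WithLp.equiv 2 (m → ℂ)).symm (X *ᵥ fun j => v (j, k))‖ ^ 2
        ≤ (‖X‖ * ‖(WithLp.equiv 2 (n → ℂ)).symm fun j => v (j, k)‖) ^ 2 := by
      apply pow_le_pow_left₀ (norm_nonneg _)
      simpa using h1
    rw [EuclideanSpace.norm_eq, EuclideanSpace.norm_eq] at h2
    rw [Real.sq_sqrt (by positivity), mul_pow, Real.sq_sqrt (by positivity)] at h2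
    simpa using h2
  have total : (∑ ik : m × p, ‖((X ⊗ₖ (1 : Matrix p p ℂ)) *ᵥ (WithLp.equiv 2 _) v) ik‖ ^ 2)
      ≤ ‖X‖ ^ 2 * ‖v‖ ^ 2 := by
    rw [Fintype.sum_prod_type_right]
    calc (∑ k : p, ∑ i : m, ‖((X ⊗ₖ (1 : Matrix p p ℂ)) *ᵥ (WithLp.equiv 2 _) v) (i, k)‖ ^ 2)
        = ∑ k : p, ∑ i : m, ‖(X *ᵥ fun j => v (j, k)) i‖ ^ 2 := by
          simp_rw [hmul]
      _ ≤ ∑ k : p, ‖X‖ ^ 2 * ∑ j, ‖v (j, k)‖ ^ 2 := Finset.sum_le_sum fun k _ => hle k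
      _ = ‖X‖ ^ 2 * ‖v‖ ^ 2 := by
          rw [← Finset.mul_sum, EuclideanSpace.norm_eq, Real.sq_sqrt (by positivity),
            Fintype.sum_prod_type_right]
  calc Real.sqrt (∑ ik : m × p, ‖((X ⊗ₖ (1 : Matrix p p ℂ)) *ᵥ (WithLp.equiv 2 _) v) ik‖ ^ 2)
      ≤ Real.sqrt (‖X‖ ^ 2 * ‖v‖ ^ 2) := Real.sqrt_le_sqrt total
    _ = ‖X‖ * ‖v‖ := by
        rw [← mul_pow, Real.sqrt_sq (by positivity)]

lemma norm_one_kronecker_le (Y : Matrix m n ℂ) :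
    ‖(1 : Matrix p p ℂ) ⊗ₖ Y‖ ≤ ‖Y‖ := by
  refine opNorm_le_of_mulVec _ (norm_nonneg Y) fun v => ?_
  have hmul : ∀ (k : p) (i : m), (((1 : Matrix p p ℂ) ⊗ₖ Y) *ᵥ (WithLp.equiv 2 _) v) (k, i)
      = (Y *ᵥ fun j => v (k, j)) i := by
    intro k i
    simp [Matrix.mulVec, dotProduct, Fintype.sum_prod_type, Matrix.one_apply,
      mul_ite, ite_mul, Finset.sum_ite_eq']
  rw [EuclideanSpace.norm_eq]
  have hle : ∀ k : p, (∑ i, ‖(Y *ᵥ fun j => v (k, j)) i‖ ^ 2)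
      ≤ ‖Y‖ ^ 2 * ∑ j, ‖v (k, j)‖ ^ 2 := by
    intro k
    have h1 := Matrix.l2_opNorm_mulVec Y ((WithLp.equiv 2 (n → ℂ)).symm fun j => v (k, j))
    have h2 : ‖(WithLp.equiv 2 (m → ℂ)).symm (Y *ᵥ fun j => v (k, j))‖ ^ 2
        ≤ (‖Y‖ * ‖(WithLp.equiv 2 (n → ℂ)).symm fun j => v (k, j)‖) ^ 2 := by
      apply pow_le_pow_left₀ (norm_nonneg _)
      simpa using h1
    rw [EuclideanSpace.norm_eq, EuclideanSpace.norm_eq] at h2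
    rw [Real.sq_sqrt (by positivity), mul_pow, Real.sq_sqrt (by positivity)] at h2
    simpa using h2
  have total : (∑ ki : p × m, ‖(((1 : Matrix p p ℂ) ⊗ₖ Y) *ᵥ (WithLp.equiv 2 _) v) ki‖ ^ 2)
      ≤ ‖Y‖ ^ 2 * ‖v‖ ^ 2 := by
    rw [Fintype.sum_prod_type]
    calc (∑ k : p, ∑ i : m, ‖(((1 : Matrix p p ℂ) ⊗ₖ Y) *ᵥ (WithLp.equiv 2 _) v) (k, i)‖ ^ 2)
        = ∑ k : p, ∑ i : m, ‖(Y *ᵥ fun j => v (k, j)) i‖ ^ 2 := by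
          simp_rw [hmul]
      _ ≤ ∑ k : p, ‖Y‖ ^ 2 * ∑ j, ‖v (k, j)‖ ^ 2 := Finset.sum_le_sum fun k _ => hle k
      _ = ‖Y‖ ^ 2 * ‖v‖ ^ 2 := by
          rw [← Finset.mul_sum, EuclideanSpace.norm_eq, Real.sq_sqrt (by positivity),
            Fintype.sum_prod_type]
  calc Real.sqrt (∑ ki : p × m, ‖(((1 : Matrix p p ℂ) ⊗ₖ Y) *ᵥ (WithLp.equiv 2 _) v) ki‖ ^ 2)
      ≤ Real.sqrt (‖Y‖ ^ 2 * ‖v‖ ^ 2) := Real.sqrt_le_sqrt total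
    _ = ‖Y‖ * ‖v‖ := by
        rw [← mul_pow, Real.sqrt_sq (by positivity)]

lemma norm_kronecker_le (X : Matrix m m ℂ) (Y : Matrix p p ℂ) :
    ‖X ⊗ₖ Y‖ ≤ ‖X‖ * ‖Y‖ := by
  have hfac : X ⊗ₖ Y = (X ⊗ₖ (1 : Matrix p p ℂ)) * ((1 : Matrix m m ℂ) ⊗ₖ Y) := by
    rw [← Matrix.mul_kronecker_mul, mul_one, one_mul]
  rw [hfac]
  exact (Matrix.l2_opNorm_mul _ _).trans
    (mul_le_mul (norm_kronecker_one_le X) (norm_one_kronecker_le Y)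
      (norm_nonneg _) (norm_nonneg _))

lemma norm_unitary_le {ι : Type*} [Fintype ι] [DecidableEq ι] [Nonempty ι]
    (U : Matrix ι ι ℂ) (hU : U ∈ Matrix.unitaryGroup ι ℂ) : ‖U‖ = 1 := by
  have h1 : Uᴴ * U = 1 := by
    simpa [Matrix.star_eq_conjTranspose] using Matrix.mem_unitaryGroup_iff'.mp hU
  have h2 : ‖U‖ * ‖U‖ = ‖(1 : Matrix ι ι ℂ)‖ := by
    rw [← Matrix.l2_opNorm_conjTranspose_mul_self, h1]
  rw [CStarRing.norm_one] at h2
  rcases mul_self_eq_one_iff.mp h2 with h | h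
  · exact h
  · nlinarith [norm_nonneg U]

lemma norm_corner_le {ι σ : Type*} [Fintype ι] [Fintype σ] [DecidableEq ι] [DecidableEq σ]
    [Nonempty ι] [Nonempty σ] (i0 : ι) (U : Matrix (ι × σ) (ι × σ) ℂ)
    (hU : U ∈ Matrix.unitaryGroup (ι × σ) ℂ) :
    ‖Matrix.of (fun i j => U (i0, i) (i0, j))‖ ≤ 1 := by
  set P : Matrix (ι × σ) σ ℂ := Matrix.of (fun q j => if q = (i0, j) then 1 else 0) with hP
  have hPP : Pᴴ * P = 1 := by
    ext i j
    simp only [Matrix.mul_apply, Matrix.conjTranspose_apply, hP, Matrix.of_apply]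
    simp only [Fintype.sum_prod_type, Prod.mk.injEq, apply_ite (star : ℂ → ℂ), star_one,
      star_zero, ite_mul, one_mul, zero_mul, Matrix.one_apply]
    rw [Finset.sum_eq_single i0]
    · simp [Finset.sum_ite_eq', eq_comm]
    · intro x _ hx; simp [hx]
    · simp
  have hnormP : ‖P‖ = 1 := by
    have h2 : ‖P‖ * ‖P‖ = ‖(1 : Matrix σ σ ℂ)‖ := by
      rw [← Matrix.l2_opNorm_conjTranspose_mul_self, hPP]
    rw [CStarRing.norm_one] at h2
    rcases mul_self_eq_one_iff.mp h2 with h | h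
    · exact h
    · nlinarith [norm_nonneg P]
  have hcorner : Matrix.of (fun i j => U (i0, i) (i0, j)) = Pᴴ * U * P := by
    ext i j
    simp only [Matrix.mul_apply, Matrix.conjTranspose_apply, hP, Matrix.of_apply]
    simp [apply_ite, ite_mul, mul_ite, Finset.sum_ite_eq, Finset.sum_ite_eq']
  rw [hcorner]
  calc ‖Pᴴ * U * P‖ ≤ ‖Pᴴ * U‖ * ‖P‖ := Matrix.l2_opNorm_mul _ _
    _ ≤ ‖Pᴴ‖ * ‖U‖ * ‖P‖ := by
        have := Matrix.l2_opNorm_mul Pᴴ U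
        nlinarith [norm_nonneg P]
    _ = 1 := by
        rw [Matrix.l2_opNorm_conjTranspose, hnormP, norm_unitary_le U hU, mul_one, one_mul]

lemma conjTranspose_kronecker (X : Matrix m m ℂ) (Y : Matrix p p ℂ) :
    (X ⊗ₖ Y)ᴴ = Xᴴ ⊗ₖ Yᴴ := by
  ext ⟨i, j⟩ ⟨k, l⟩
  simp [Matrix.conjTranspose_apply]

end Aux

/-- `U` is an `(α, ·, ε)`-block-encoding of the operator `A`. -/
def IsBlockEncoding {ι σ : Type*} [Fintype ι] [Fintype σ] [DecidableEq ι]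
    [DecidableEq σ] (i0 : ι)
    (U : Matrix (ι × σ) (ι × σ) ℂ) (A : Matrix σ σ ℂ) (α ε : ℝ) : Prop :=
  U ∈ Matrix.unitaryGroup (ι × σ) ℂ ∧
    ‖A - (α : ℂ) • Matrix.of (fun i j => U (i0, i) (i0, j))‖ ≤ ε

/-- Tensor product of block-encodings: if `U_A` is an `(α, a, ε_A)`-block-encoding
of the `s`-qubit operator `A` and `U_B` a `(β, b, ε_B)`-block-encoding of the
`t`-qubit operator `B`, then (after the register permutation bringing both
ancillas to the front) `U_A ⊗ U_B` is an
`(αβ, a+b, αε_B + βε_A + ε_A ε_B)`-block-encoding of `A ⊗ B`. -/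
theorem blockEncoding_kronecker
    (a b s t : ℕ) (α β εA εB : ℝ) (hα : 0 ≤ α) (hβ : 0 ≤ β)
    (A : Matrix (Fin (2 ^ s)) (Fin (2 ^ s)) ℂ)
    (B : Matrix (Fin (2 ^ t)) (Fin (2 ^ t)) ℂ)
    (UA : Matrix (Fin (2 ^ a) × Fin (2 ^ s)) (Fin (2 ^ a) × Fin (2 ^ s)) ℂ)
    (UB : Matrix (Fin (2 ^ b) × Fin (2 ^ t)) (Fin (2 ^ b) × Fin (2 ^ t)) ℂ)
    (hA : IsBlockEncoding 0 UA A α εA)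
    (hB : IsBlockEncoding 0 UB B β εB) :
    let U : Matrix ((Fin (2 ^ a) × Fin (2 ^ b)) × Fin (2 ^ s) × Fin (2 ^ t))
        ((Fin (2 ^ a) × Fin (2 ^ b)) × Fin (2 ^ s) × Fin (2 ^ t)) ℂ :=
      (UA ⊗ₖ UB).submatrix
        (fun p => ((p.1.1, p.2.1), (p.1.2, p.2.2)))
        (fun p => ((p.1.1, p.2.1), (p.1.2, p.2.2)))
    IsBlockEncoding 0 U (A ⊗ₖ B) (α * β) (α * εB + β * εA + εA * εB) := by
  intro U
  obtain ⟨hUA, hA2⟩ := hA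
  obtain ⟨hUB, hB2⟩ := hB
  have hεA : 0 ≤ εA := le_trans (norm_nonneg _) hA2
  have hεB : 0 ≤ εB := le_trans (norm_nonneg _) hB2
  set e : ((Fin (2 ^ a) × Fin (2 ^ b)) × Fin (2 ^ s) × Fin (2 ^ t)) ≃
      ((Fin (2 ^ a) × Fin (2 ^ s)) × Fin (2 ^ b) × Fin (2 ^ t)) :=
    Equiv.prodProdProdComm (Fin (2 ^ a)) (Fin (2 ^ b)) (Fin (2 ^ s)) (Fin (2 ^ t)) with he
  have hUe : U = (UA ⊗ₖ UB).submatrix e e := rfl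
  constructor
  · -- unitarity
    rw [Matrix.mem_unitaryGroup_iff, hUe, Matrix.star_eq_conjTranspose,
      Matrix.conjTranspose_submatrix, Matrix.submatrix_mul_equiv,
      _root_.conjTranspose_kronecker, ← Matrix.mul_kronecker_mul]
    have h1 : UA * UAᴴ = 1 := by
      simpa [Matrix.star_eq_conjTranspose] using Matrix.mem_unitaryGroup_iff.mp hUA
    have h2 : UB * UBᴴ = 1 := by
      simpa [Matrix.star_eq_conjTranspose] using Matrix.mem_unitaryGroup_iff.mp hUB
    rw [h1, h2, Matrix.one_kronecker_one, Matrix.submatrix_one_equiv]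
  · -- norm bound
    set CA : Matrix (Fin (2 ^ s)) (Fin (2 ^ s)) ℂ :=
      Matrix.of (fun i j => UA (0, i) (0, j)) with hCA
    set CB : Matrix (Fin (2 ^ t)) (Fin (2 ^ t)) ℂ :=
      Matrix.of (fun i j => UB (0, i) (0, j)) with hCB
    have hcorner : Matrix.of (fun i j => U (0, i) (0, j)) = CA ⊗ₖ CB := by
      ext ⟨i1, i2⟩ ⟨j1, j2⟩
      rfl
    rw [hcorner]
    have hCAle : ‖CA‖ ≤ 1 := norm_corner_le 0 UA hUA
    have hCBle : ‖CB‖ ≤ 1 := norm_corner_le 0 UB hUB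
    have hAle : ‖A‖ ≤ α + εA := by
      calc ‖A‖ = ‖(A - (α : ℂ) • CA) + (α : ℂ) • CA‖ := by rw [sub_add_cancel]
        _ ≤ ‖A - (α : ℂ) • CA‖ + ‖(α : ℂ) • CA‖ := norm_add_le _ _
        _ ≤ εA + α := by
            refine add_le_add hA2 ?_
            rw [norm_smul, Complex.norm_real, Real.norm_of_nonneg hα]
            nlinarith [norm_nonneg CA]
        _ = α + εA := by ring
    have hkey : A ⊗ₖ B - ((α * β : ℝ) : ℂ) • (CA ⊗ₖ CB)
        = (A - (α : ℂ) • CA) ⊗ₖ ((β : ℂ) • CB) + A ⊗ₖ (B - (β : ℂ) • CB) := by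
      ext ⟨i, j⟩ ⟨k, l⟩
      push_cast
      simp only [Matrix.sub_apply, Matrix.add_apply, Matrix.smul_apply,
        Matrix.kroneckerMap_apply, smul_eq_mul]
      ring
    rw [hkey]
    have hBtil : ‖(β : ℂ) • CB‖ ≤ β := by
      rw [norm_smul, Complex.norm_real, Real.norm_of_nonneg hβ]
      nlinarith [norm_nonneg CB]
    calc ‖(A - (α : ℂ) • CA) ⊗ₖ ((β : ℂ) • CB) + A ⊗ₖ (B - (β : ℂ) • CB)‖
        ≤ ‖(A - (α : ℂ) • CA) ⊗ₖ ((β : ℂ) • CB)‖ + ‖A ⊗ₖ (B - (β : ℂ) • CB)‖ :=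
          norm_add_le _ _
      _ ≤ ‖A - (α : ℂ) • CA‖ * ‖(β : ℂ) • CB‖ + ‖A‖ * ‖B - (β : ℂ) • CB‖ :=
          add_le_add (norm_kronecker_le _ _) (norm_kronecker_le _ _)
      _ ≤ εA * β + (α + εA) * εB := by
          refine add_le_add ?_ ?_
          · exact mul_le_mul hA2 hBtil (norm_nonneg _) hεA
          · exact mul_le_mul hAle hB2 (norm_nonneg _) (by linarith)
      _ = α * εB + β * εA + εA * εB := by ring
end

section
/- Let U_B be a unitary that is a (α_B, a_B, 0)-block-encoding of B, and consider the 2×2-block construction U_ℋ = (H⊗I)(|0⟩⟨0| ⊗ U₀₁† + |1⟩⟨1| ⊗ U₀₁)(H⊗I), where U₀₁ is a (1, a_B+1, 0)-block-encoding of |0⟩⟨1| ⊗ B. Then applying the extra sign flip yields a (2α_B, a_B+2, 0)-block-encoding of ℋ = -(|0⟩⟨1| ⊗ B + |1⟩⟨0| ⊗ B†). -/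
open Matrix Kronecker
open scoped Matrix.Norms.L2Operator

/-- Given `U₀₁`, an exact block-encoding (sub-normalization `α_B`) of
`|0⟩⟨1| ⊗ B`, the LCU circuit `(H⊗I)(|0⟩⟨0| ⊗ U₀₁ᴴ + |1⟩⟨1| ⊗ U₀₁)(H⊗I)`
followed by a global sign flip (`R_y(2π) = -I`) is a
`(2α_B, a_B+2, 0)`-block-encoding of `ℋ = -(|0⟩⟨1| ⊗ B + |1⟩⟨0| ⊗ Bᴴ)`. -/
theorem blockEncoding_Hamiltonian_from_B
    (aB s : ℕ) (αB : ℝ) (hαB : 0 < αB)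
    (B : Matrix (Fin (2 ^ s)) (Fin (2 ^ s)) ℂ)
    (U01 : Matrix (Fin (2 ^ (aB + 1)) × (Fin 2 × Fin (2 ^ s)))
      (Fin (2 ^ (aB + 1)) × (Fin 2 × Fin (2 ^ s))) ℂ)
    (E01 : Matrix (Fin 2) (Fin 2) ℂ)
    (hE01 : E01 = Matrix.of fun i j => if i = 0 ∧ j = 1 then 1 else 0)
    (hU01 : IsBlockEncoding 0 U01 (E01 ⊗ₖ B) αB 0) :
    let ℋ : Matrix (Fin 2 × Fin (2 ^ s)) (Fin 2 × Fin (2 ^ s)) ℂ :=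
      -((E01 ⊗ₖ B) + (E01 ⊗ₖ B)ᴴ)
    let Hgate : Matrix (Fin 2) (Fin 2) ℂ :=
      ((Real.sqrt 2 : ℂ))⁻¹ • !![1, 1; 1, -1]
    let ctrl : Matrix (Fin 2 × (Fin (2 ^ (aB + 1)) × (Fin 2 × Fin (2 ^ s))))
        (Fin 2 × (Fin (2 ^ (aB + 1)) × (Fin 2 × Fin (2 ^ s)))) ℂ :=
      Matrix.of fun p q =>
        if p.1 = q.1 then
          (if p.1 = 0 then U01ᴴ p.2 q.2 else U01 p.2 q.2)
        else 0
    let Ufull := (-1 : ℂ) • ((Hgate ⊗ₖ 1) * ctrl * (Hgate ⊗ₖ 1))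
    let U : Matrix ((Fin 2 × Fin (2 ^ (aB + 1))) × (Fin 2 × Fin (2 ^ s)))
        ((Fin 2 × Fin (2 ^ (aB + 1))) × (Fin 2 × Fin (2 ^ s))) ℂ :=
      Ufull.submatrix (fun p => (p.1.1, (p.1.2, p.2)))
        (fun p => (p.1.1, (p.1.2, p.2)))
    IsBlockEncoding 0 U ℋ (2 * αB) 0 := by
  intro ℋ Hgate ctrl Ufull U
  obtain ⟨hUu, hUn⟩ := hU01
  -- exactness of the given block-encoding
  have hexact : E01 ⊗ₖ B = (αB : ℂ) • Matrix.of (fun i j => U01 (0, i) (0, j)) := by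
    have h0 := norm_le_zero_iff.mp hUn
    rwa [sub_eq_zero] at h0
  have hent : ∀ i j, (E01 ⊗ₖ B) i j = (αB : ℂ) * U01 (0, i) (0, j) := by
    intro i j; rw [hexact]; simp
  have h2 : ((Real.sqrt 2 : ℝ) : ℂ) * ((Real.sqrt 2 : ℝ) : ℂ) = 2 := by
    rw [← Complex.ofReal_mul, Real.mul_self_sqrt (by norm_num)]
    norm_num
  -- unitarity of the Hadamard gate
  have hH : Hgate * Hgateᴴ = 1 := by
    ext i j
    fin_cases i <;> fin_cases j <;>
      simp [Hgate, Matrix.mul_apply, Fin.sum_univ_two, Matrix.one_apply, star_smul,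
        Complex.ext_iff] <;>
      field_simp <;> norm_num [Real.sq_sqrt]
  -- unitarity of U01 in both orders
  have hU1 : U01 * U01ᴴ = 1 := Matrix.mem_unitaryGroup_iff.mp hUu
  have hU2 : U01ᴴ * U01 = 1 := Matrix.mem_unitaryGroup_iff'.mp hUu
  -- unitarity of ctrl
  have hctrl : ctrl * ctrlᴴ = 1 := by
    ext ⟨c, x⟩ ⟨d, y⟩
    have : (ctrl * ctrlᴴ) (c, x) (d, y) =
        ∑ e : Fin 2, ∑ z, (if c = e then (if c = 0 then U01ᴴ x z else U01 x z) else 0) *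
          star (if d = e then (if d = 0 then U01ᴴ y z else U01 y z) else 0) := by
      simp [Matrix.mul_apply, Matrix.conjTranspose_apply, ctrl, Fintype.sum_prod_type]
    rw [this]
    by_cases hcd : c = d
    · subst hcd
      rw [Fin.sum_univ_two]
      fin_cases c
      · have : ∀ z, U01ᴴ x z * star (U01ᴴ y z) = U01ᴴ x z * U01 z y := by
          intro z; simp [Matrix.conjTranspose_apply]
        simpa [Matrix.one_apply, Matrix.mul_apply, this] using congrFun (congrFun hU2 x) y
      · have : ∀ z, U01 x z * star (U01 y z) = U01 x z * U01ᴴ z y := by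
          intro z; simp [Matrix.conjTranspose_apply]
        simpa [Matrix.one_apply, Matrix.mul_apply, this] using congrFun (congrFun hU1 x) y
    · have hz : ∀ (e : Fin 2) z,
          (if c = e then (if c = 0 then U01ᴴ x z else U01 x z) else 0) *
            star (if d = e then (if d = 0 then U01ᴴ y z else U01 y z) else 0) = 0 := by
        intro e z
        by_cases h : c = e
        · have hd : ¬ d = e := fun h' => hcd (h.trans h'.symm)
          simp [hd]
        · simp [h]
      simp only [hz, Finset.sum_const_zero]
      simp [Matrix.one_apply, Prod.ext_iff, hcd]
  -- unitarity of Hgate ⊗ 1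
  have hkT : (Hgate ⊗ₖ (1 : Matrix (Fin (2 ^ (aB + 1)) × (Fin 2 × Fin (2 ^ s)))
      (Fin (2 ^ (aB + 1)) × (Fin 2 × Fin (2 ^ s))) ℂ))ᴴ = Hgateᴴ ⊗ₖ 1 := by
    ext ⟨i, j⟩ ⟨k, l⟩
    simp [Matrix.conjTranspose_apply, Matrix.one_apply, mul_comm, eq_comm,
      apply_ite (starRingEnd ℂ)]
  have hHk : (Hgate ⊗ₖ (1 : Matrix (Fin (2 ^ (aB + 1)) × (Fin 2 × Fin (2 ^ s)))
      (Fin (2 ^ (aB + 1)) × (Fin 2 × Fin (2 ^ s))) ℂ)) *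
      (Hgate ⊗ₖ 1)ᴴ = 1 := by
    rw [hkT, ← Matrix.mul_kronecker_mul, hH, Matrix.one_mul, Matrix.one_kronecker_one]
  -- unitarity of Ufull
  have hHk' : (Hgate ⊗ₖ (1 : Matrix (Fin (2 ^ (aB + 1)) × (Fin 2 × Fin (2 ^ s)))
      (Fin (2 ^ (aB + 1)) × (Fin 2 × Fin (2 ^ s))) ℂ))ᴴ *
      (Hgate ⊗ₖ 1) = 1 :=
    Matrix.mem_unitaryGroup_iff'.mp (Matrix.mem_unitaryGroup_iff.mpr hHk)
  have hUfull : Ufull * Ufullᴴ = 1 := by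
    show ((-1 : ℂ) • ((Hgate ⊗ₖ 1) * ctrl * (Hgate ⊗ₖ 1))) *
        ((-1 : ℂ) • ((Hgate ⊗ₖ 1) * ctrl * (Hgate ⊗ₖ 1)))ᴴ = 1
    rw [Matrix.conjTranspose_smul, Matrix.smul_mul, Matrix.mul_smul, smul_smul,
      show ((-1 : ℂ) * star (-1 : ℂ)) = 1 by simp, one_smul]
    simp only [Matrix.conjTranspose_mul]
    calc (Hgate ⊗ₖ 1) * ctrl * (Hgate ⊗ₖ 1) * ((Hgate ⊗ₖ 1)ᴴ * (ctrlᴴ * (Hgate ⊗ₖ 1)ᴴ))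
        = (Hgate ⊗ₖ 1) * (ctrl * (((Hgate ⊗ₖ 1) * (Hgate ⊗ₖ 1)ᴴ) * (ctrlᴴ * (Hgate ⊗ₖ 1)ᴴ))) := by
          noncomm_ring
      _ = 1 := by
          rw [hHk, Matrix.one_mul, ← Matrix.mul_assoc ctrl, hctrl, Matrix.one_mul, hHk]
  -- U is obtained from Ufull via a re-indexing equivalence
  have hUsub : U = Ufull.submatrix (Equiv.prodAssoc (Fin 2) (Fin (2 ^ (aB + 1)))
      (Fin 2 × Fin (2 ^ s))) (Equiv.prodAssoc _ _ _) := rfl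
  constructor
  · rw [Matrix.mem_unitaryGroup_iff, hUsub]
    have : star (Ufull.submatrix (Equiv.prodAssoc (Fin 2) (Fin (2 ^ (aB + 1)))
        (Fin 2 × Fin (2 ^ s))) (Equiv.prodAssoc _ _ _)) =
        (star Ufull).submatrix (Equiv.prodAssoc (Fin 2) (Fin (2 ^ (aB + 1)))
        (Fin 2 × Fin (2 ^ s))) (Equiv.prodAssoc _ _ _) := rfl
    rw [this, Matrix.submatrix_mul_equiv]
    show (Ufull * Ufullᴴ).submatrix _ _ = 1
    rw [hUfull, Matrix.submatrix_one_equiv]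
  · rw [norm_le_zero_iff, sub_eq_zero]
    have key : ∀ p q, Ufull ((0 : Fin 2), p) ((0 : Fin 2), q) =
        -(Hgate 0 0 * Hgate 0 0 * U01ᴴ p q + Hgate 0 1 * Hgate 1 0 * U01 p q) := by
      intro p q
      simp only [Ufull, Matrix.smul_apply, neg_smul, one_smul, neg_inj]
      simp [Matrix.mul_apply, Fintype.sum_prod_type, Fin.sum_univ_two, Matrix.one_apply,
        ctrl, Finset.mul_sum, Finset.sum_ite_eq, Finset.sum_ite_eq']
      ring
    ext i j
    have hUe : U ((0 : Fin 2 × Fin (2 ^ (aB + 1))), i) (0, j) =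
        Ufull ((0 : Fin 2), ((0 : Fin (2 ^ (aB + 1))), i)) (0, (0, j)) := rfl
    have hinv : ((Real.sqrt 2 : ℂ))⁻¹ * ((Real.sqrt 2 : ℂ))⁻¹ = 2⁻¹ := by
      rw [← mul_inv, h2]
    have hconj : (starRingEnd ℂ) ((αB : ℂ)) = (αB : ℂ) := Complex.conj_ofReal αB
    simp only [ℋ, Matrix.neg_apply, Matrix.add_apply, Matrix.conjTranspose_apply,
      Matrix.smul_apply, Matrix.of_apply, smul_eq_mul]
    rw [hUe, key, hent i j, hent j i]
    simp only [Hgate, Matrix.smul_apply, Matrix.cons_val', Matrix.cons_val_zero,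
      Matrix.cons_val_one, Matrix.head_cons, Matrix.head_fin_const, Matrix.empty_val',
      Matrix.cons_val_fin_one, Matrix.conjTranspose_apply, smul_eq_mul, mul_one,
      _root_.map_mul, hconj]
    push_cast
    ring_nf
    rw [mul_comm] at hinv
    rw [show ((Real.sqrt 2 : ℂ))⁻¹ ^ 2 = 2⁻¹ by rw [sq, hinv]]
    simp [Complex.star_def, _root_.map_mul, hconj]
    ring
end

section
/- Let U be a unitary and |Ψ₀⟩ a unit state with U|Ψ₀⟩ = sin(θ)|g⟩ + cos(θ)|b⟩, where |g⟩ is a unit vector in the 'good' subspace (range of projector P), |b⟩ a unit vector in its orthogonal complement, and P|b⟩ = 0, (I-P)|g⟩ = 0. Then the Grover iterate W = -U R_{Ψ₀} U† R_g, where R_{Ψ₀} = I - 2|Ψ₀⟩⟨Ψ₀| and R_g = I - 2P, preserves the 2-dimensional subspace spanned by |g⟩ and |b⟩, and W^m U|Ψ₀⟩ = sin((2m+1)θ)|g⟩ + cos((2m+1)θ)|b⟩ for all natural numbers m. -/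
open Matrix


lemma vecMulVec_mulVec' {d : ℕ} (v w x : Fin d → ℂ) :
    (vecMulVec v w).mulVec x = (w ⬝ᵥ x) • v := by
  ext i
  simp [vecMulVec, mulVec, dotProduct, Finset.mul_sum, mul_assoc, mul_comm, mul_left_comm]

/-- Grover iterate rotation: if `U|Ψ₀⟩ = sin θ |g⟩ + cos θ |b⟩` with `|g⟩` in
the good subspace (range of the projector `P`) and `|b⟩` orthogonal to it, then
`W = -U R_{Ψ₀} Uᴴ R_g` preserves `span{g, b}` and
`Wᵐ U|Ψ₀⟩ = sin((2m+1)θ)|g⟩ + cos((2m+1)θ)|b⟩`. -/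
theorem grover_iterate_rotation
    (d : ℕ) (U : Matrix (Fin d) (Fin d) ℂ)
    (hU : U ∈ Matrix.unitaryGroup (Fin d) ℂ)
    (P : Matrix (Fin d) (Fin d) ℂ) (hPherm : Pᴴ = P) (hPidem : P * P = P)
    (Ψ₀ g b : Fin d → ℂ) (θ : ℝ)
    (hΨ₀ : dotProduct (star Ψ₀) Ψ₀ = 1)
    (hg : dotProduct (star g) g = 1)
    (hb : dotProduct (star b) b = 1)
    (hgb : dotProduct (star g) b = 0)
    (hPg : P.mulVec g = g) (hPb : P.mulVec b = 0)
    (hUΨ : U.mulVec Ψ₀ = (Real.sin θ : ℂ) • g + (Real.cos θ : ℂ) • b) :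
    let RΨ₀ : Matrix (Fin d) (Fin d) ℂ :=
      1 - (2 : ℂ) • Matrix.vecMulVec Ψ₀ (star Ψ₀)
    let Rg : Matrix (Fin d) (Fin d) ℂ := 1 - (2 : ℂ) • P
    let W : Matrix (Fin d) (Fin d) ℂ := -(U * RΨ₀ * Uᴴ * Rg)
    W.mulVec g ∈ Submodule.span ℂ ({g, b} : Set (Fin d → ℂ)) ∧
      W.mulVec b ∈ Submodule.span ℂ ({g, b} : Set (Fin d → ℂ)) ∧
      ∀ m : ℕ, (W ^ m).mulVec (U.mulVec Ψ₀)
        = (Real.sin ((2 * m + 1) * θ) : ℂ) • g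
          + (Real.cos ((2 * m + 1) * θ) : ℂ) • b := by
  intro RΨ₀ Rg W
  have hbg : dotProduct (star b) g = 0 := by
    rw [Matrix.star_dotProduct]
    simp [hgb]
  have hUU' : U * Uᴴ = 1 := by
    simpa [Matrix.star_eq_conjTranspose] using hU.2
  have hpyth : (Real.sin θ : ℂ)^2 + (Real.cos θ : ℂ)^2 = 1 := by
    have := Real.sin_sq_add_cos_sq θ
    push_cast [← Complex.ofReal_pow, ← Complex.ofReal_add]
    exact_mod_cast congrArg Complex.ofReal this
  set ψ : Fin d → ℂ := U.mulVec Ψ₀ with hψ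
  have hWx : ∀ x : Fin d → ℂ, W.mulVec x
      = -(Rg.mulVec x) + ((2 : ℂ) * (star ψ ⬝ᵥ Rg.mulVec x)) • ψ := by
    intro x
    have h1 : ∀ y : Fin d → ℂ, star Ψ₀ ⬝ᵥ Uᴴ.mulVec y = star ψ ⬝ᵥ y := by
      intro y
      rw [Matrix.dotProduct_mulVec, hψ, Matrix.star_mulVec]
    show (-(U * RΨ₀ * Uᴴ * Rg)).mulVec x = _
    rw [Matrix.neg_mulVec, ← Matrix.mulVec_mulVec, ← Matrix.mulVec_mulVec,
      ← Matrix.mulVec_mulVec]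
    set y := Rg.mulVec x with hy
    have hR : RΨ₀.mulVec (Uᴴ.mulVec y)
        = Uᴴ.mulVec y - ((2 : ℂ) * (star ψ ⬝ᵥ y)) • Ψ₀ := by
      show ((1 : Matrix (Fin d) (Fin d) ℂ)
          - (2 : ℂ) • Matrix.vecMulVec Ψ₀ (star Ψ₀)).mulVec (Uᴴ.mulVec y) = _
      rw [Matrix.sub_mulVec, Matrix.one_mulVec, Matrix.smul_mulVec,
        vecMulVec_mulVec', h1, smul_smul]
    rw [hR, Matrix.mulVec_sub, Matrix.mulVec_mulVec, hUU', Matrix.one_mulVec,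
      Matrix.mulVec_smul, ← hψ]
    abel
  have hRgg : Rg.mulVec g = -g := by
    show ((1 : Matrix (Fin d) (Fin d) ℂ) - (2:ℂ) • P).mulVec g = -g
    rw [Matrix.sub_mulVec, Matrix.one_mulVec, Matrix.smul_mulVec, hPg]
    module
  have hRgb : Rg.mulVec b = b := by
    show ((1 : Matrix (Fin d) (Fin d) ℂ) - (2:ℂ) • P).mulVec b = b
    rw [Matrix.sub_mulVec, Matrix.one_mulVec, Matrix.smul_mulVec, hPb]
    module
  have hWg : W.mulVec g
      = (Real.cos (2*θ) : ℂ) • g - (Real.sin (2*θ) : ℂ) • b := by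
    rw [hWx, hRgg, hUΨ, Real.cos_two_mul, Real.sin_two_mul]
    simp only [dotProduct_neg, star_add, star_smul, add_dotProduct,
      smul_dotProduct, hg, hbg, Complex.star_def, Complex.conj_ofReal,
      smul_eq_mul, mul_one, mul_zero, add_zero]
    match_scalars <;>
      first
        | ring1
        | linear_combination (2 : ℂ) * Complex.sin_sq_add_cos_sq (θ:ℂ)
        | linear_combination (-2 : ℂ) * Complex.sin_sq_add_cos_sq (θ:ℂ)
  have hWb : W.mulVec b
      = (Real.sin (2*θ) : ℂ) • g + (Real.cos (2*θ) : ℂ) • b := by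
    rw [hWx, hRgb, hUΨ, Real.cos_two_mul, Real.sin_two_mul]
    simp only [star_add, star_smul, add_dotProduct,
      smul_dotProduct, hb, hgb, Complex.star_def, Complex.conj_ofReal,
      smul_eq_mul, mul_one, mul_zero, zero_add]
    match_scalars <;>
      first
        | ring1
        | linear_combination (2 : ℂ) * Complex.sin_sq_add_cos_sq (θ:ℂ)
        | linear_combination (-2 : ℂ) * Complex.sin_sq_add_cos_sq (θ:ℂ)
  refine ⟨?_, ?_, ?_⟩
  · rw [hWg]
    exact sub_mem
      (Submodule.smul_mem _ _ (Submodule.subset_span (Set.mem_insert _ _)))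
      (Submodule.smul_mem _ _ (Submodule.subset_span (Set.mem_insert_of_mem _ rfl)))
  · rw [hWb]
    exact add_mem
      (Submodule.smul_mem _ _ (Submodule.subset_span (Set.mem_insert _ _)))
      (Submodule.smul_mem _ _ (Submodule.subset_span (Set.mem_insert_of_mem _ rfl)))
  · intro m
    induction m with
    | zero =>
      simpa [Matrix.one_mulVec] using hUΨ
    | succ m ih =>
      rw [pow_succ', ← Matrix.mulVec_mulVec, ih, Matrix.mulVec_add,
        Matrix.mulVec_smul, Matrix.mulVec_smul, hWg, hWb]
      have h2 : ((2 : ℝ) * (m+1) + 1) * θ = (2 * m + 1) * θ + 2 * θ := by ring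
      push_cast [h2, Real.sin_add, Real.cos_add]
      match_scalars <;> ring
end
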